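/- Let G be a finite directed graph, F ⊆ V with |F| ≤ f, and suppose G−F has two distinct source components S₁ and S₂ in its strongly connected component decomposition. Then G does not satisfy condition SC with parameter F: for the partition A = S₁, B = V − S₁, neither A (f+1)-propagates to B−F avoiding F, nor B (f+1)-propagates to A−F avoiding F. -/

import Mathlib

open Set

variable {V : Type*}

/-- A (directed) path: nonempty list of distinct vertices with consecutive edges. -/
def DiPath (E : V → V → Prop) (p : List V) : Prop :=
  p ≠ [] ∧ p.Nodup ∧ p.Chain' E

/-- A path excludes `F` if none of its internal vertices lies in `F`. -/
def Excludes (F : Set V) (p : List V) : Prop :=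
  ∀ x ∈ p.tail.dropLast, x ∉ F

/-- A path from (a vertex of) `A` to `v`. -/
def PathFromTo (E : V → V → Prop) (A : Set V) (v : V) (p : List V) : Prop :=
  DiPath E p ∧ (∃ a ∈ A, p.head? = some a) ∧ p.getLast? = some v

/-- There exist `n` pairwise internally-disjoint `A`-`v` paths excluding `F`
(sharing only the terminal `v`). -/
def DisjPaths (E : V → V → Prop) (F A : Set V) (v : V) (n : ℕ) : Prop :=
  ∃ P : Fin n → List V,
    (∀ i, PathFromTo E A v (P i) ∧ Excludes F (P i)) ∧
    (∀ i j, i ≠ j → ∀ x, x ∈ P i → x ∈ P j → x = v)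

/-- `A` (f+1)-propagates to every vertex of `B` avoiding `F`. -/
def Propagates (E : V → V → Prop) (f : ℕ) (F A B : Set V) : Prop :=
  ∀ v ∈ B, DisjPaths E F A v (f + 1)

/-- Condition SC with parameter `F`. -/
def CondSC (E : V → V → Prop) (f : ℕ) (F : Set V) : Prop :=
  ∀ A B : Set V, A ∪ B = Set.univ → A ∩ B = ∅ →
    (A \ F).Nonempty → (B \ F).Nonempty →
    Propagates E f F A (B \ F) ∨ Propagates E f F B (A \ F)

/-- Reachability within the vertex set `W`. -/
def ReachIn (E : V → V → Prop) (W : Set V) : V → V → Prop :=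
  Relation.ReflTransGen (fun a b => a ∈ W ∧ b ∈ W ∧ E a b)

/-- `S` is a (maximal) strongly connected component of the induced subgraph on `W`. -/
def IsSCCIn (E : V → V → Prop) (W S : Set V) : Prop :=
  S.Nonempty ∧ S ⊆ W ∧ (∀ u ∈ S, ∀ v ∈ S, ReachIn E W u v) ∧
  ∀ T, S ⊆ T → T ⊆ W → (∀ u ∈ T, ∀ v ∈ T, ReachIn E W u v) → T = S

/-- `S` is a source component of `G − F`: an SCC of the induced subgraph on `V − F`
receiving no edge from a vertex of `V − F` outside `S`. -/
def IsSourceComponent (E : V → V → Prop) (F S : Set V) : Prop :=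
  IsSCCIn E (Set.univ \ F) S ∧ ∀ u, u ∉ F → u ∉ S → ∀ s ∈ S, ¬ E u s

/-- In-neighborhood of `T` contained in `B`. -/
def inNbr (E : V → V → Prop) (B T : Set V) : Set V :=
  {u ∈ B | ∃ v ∈ T, E u v}

/-- `N(F→S)`: vertices of `F` with an edge into `S`. -/
def NFS (E : V → V → Prop) (F S : Set V) : Set V :=
  {w ∈ F | ∃ s ∈ S, E w s}

/-- Edge relation of the subgraph induced on `U`. -/
def inducedE (E : V → V → Prop) (U : Set V) : V → V → Prop :=
  fun a b => a ∈ U ∧ b ∈ U ∧ E a b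

/-- Condition NC with parameter `F`. -/
def CondNC (E : V → V → Prop) (f : ℕ) (F : Set V) : Prop :=
  ∀ L C R : Set V, L ∪ C ∪ R = Set.univ →
    L ∩ C = ∅ → L ∩ R = ∅ → C ∩ R = ∅ →
    (L \ F).Nonempty → (R \ F).Nonempty →
    f < (inNbr E (R ∪ C) (L \ F)).ncard ∨ f < (inNbr E (L ∪ C) (R \ F)).ncard

/-! Every path entering a source component `S` of `G − F` from outside does so along an edge
whose tail lies in `F`; if the internal vertices of the path avoid `F`, that tail is its first
vertex. Hence `f + 1` internally disjoint such paths from `A` to a vertex of `S \ F` start at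
`f + 1` distinct vertices of `A ∩ F`. This is impossible for `A = S₁` towards a vertex of `S₂`,
since `S₁` avoids `F`, and for `A = V − S₁` towards a vertex of `S₁`, since `|F| ≤ f`. -/

section

variable {E : V → V → Prop} {W F S T A : Set V}

theorem IsSCCIn.disjoint (hS : IsSCCIn E W S) (hT : IsSCCIn E W T) (hne : S ≠ T) :
    Disjoint S T := by
  obtain ⟨-, hSW, hSr, hSmax⟩ := hS
  obtain ⟨-, hTW, hTr, hTmax⟩ := hT
  refine Set.disjoint_left.mpr fun x hxS hxT => ?_
  have hreach : ∀ u ∈ S ∪ T, ∀ v ∈ S ∪ T, ReachIn E W u v := by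
    rintro u (hu | hu) v (hv | hv)
    · exact hSr u hu v hv
    · exact (hSr u hu x hxS).trans (hTr x hxT v hv)
    · exact (hTr u hu x hxT).trans (hSr x hxS v hv)
    · exact hTr u hu v hv
  exact hne ((hSmax _ subset_union_left (union_subset hSW hTW) hreach).symm.trans
    (hTmax _ subset_union_right (union_subset hSW hTW) hreach))

theorem IsSourceComponent.mem_or_mem_of_edge (hS : IsSourceComponent E F S) {u v : V}
    (huv : E u v) (hv : v ∈ S) : u ∈ S ∨ u ∈ F := by
  by_contra! h
  exact hS.2 u h.2 h.1 v hv huv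

theorem exists_mem_dropLast_of_isChain (hS : ∀ u v, E u v → v ∈ S → u ∈ S ∨ u ∈ F)
    {p : List V} (hp : p.IsChain E) {a v : V} (ha : p.head? = some a) (hv : p.getLast? = some v)
    (haS : a ∉ S) (hvS : v ∈ S) : ∃ x ∈ p.dropLast, x ∈ F := by
  induction p generalizing a with
  | nil => simp at ha
  | cons a' l ih =>
    obtain rfl : a' = a := by simpa using ha
    cases l with
    | nil =>
      obtain rfl : a' = v := by simpa using hv
      exact absurd hvS haS
    | cons b l =>
      rw [List.isChain_cons_cons] at hp
      rw [List.dropLast_cons_cons]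
      by_cases hb : b ∈ S
      · exact ⟨a', List.mem_cons_self, (hS a' b hp.1 hb).resolve_left haS⟩
      · obtain ⟨x, hx, hxF⟩ := ih hp.2 rfl (by simpa [List.getLast?_cons_cons] using hv) hb
        exact ⟨x, List.mem_cons_of_mem a' hx, hxF⟩

theorem Excludes.eq_of_mem_dropLast {p : List V} (hp : Excludes F p) {a x : V}
    (ha : p.head? = some a) (hx : x ∈ p.dropLast) (hxF : x ∈ F) : x = a := by
  match p, ha with
  | [_], rfl => simp at hx
  | a :: b :: l, rfl =>
    rw [List.dropLast_cons_cons, List.mem_cons] at hx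
    exact hx.resolve_right fun hx' => hp x (by simpa using hx') hxF

theorem IsSourceComponent.head_mem_of_pathFromTo (hS : IsSourceComponent E F S)
    (hAS : Disjoint A S) {v : V} (hv : v ∈ S) {p : List V} (hp : PathFromTo E A v p)
    (hpF : Excludes F p) {a : V} (ha : p.head? = some a) : a ∈ A ∩ F := by
  obtain ⟨⟨-, -, hchain⟩, ⟨a', ha'A, ha'⟩, hlast⟩ := hp
  obtain rfl : a' = a := Option.some_injective _ (ha'.symm.trans ha)
  obtain ⟨x, hx, hxF⟩ := exists_mem_dropLast_of_isChain (fun _ _ => hS.mem_or_mem_of_edge)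
    hchain ha hlast (hAS.notMem_of_mem_left ha'A) hv
  exact ⟨ha'A, hpF.eq_of_mem_dropLast ha hx hxF ▸ hxF⟩

theorem DisjPaths.le_ncard [Finite V] {v : V} {n : ℕ} (hP : DisjPaths E F A v n) (hv : v ∉ T)
    (hT : ∀ p a, PathFromTo E A v p → Excludes F p → p.head? = some a → a ∈ T) :
    n ≤ T.ncard := by
  obtain ⟨P, hpath, hdisj⟩ := hP
  have hhead : ∀ i, ∃ a, (P i).head? = some a := fun i => by
    obtain ⟨-, ⟨a, -, ha⟩, -⟩ := (hpath i).1
    exact ⟨a, ha⟩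
  choose h hh using hhead
  have hinj : Function.Injective fun i => (⟨h i, hT _ _ (hpath i).1 (hpath i).2 (hh i)⟩ : T) := by
    intro i j hij
    by_contra hne
    have hhi : h i ∈ P i := List.mem_of_mem_head? (hh i)
    have hheq : h i = h j := congrArg Subtype.val hij
    have hhj : h i ∈ P j := hheq ▸ List.mem_of_mem_head? (hh j)
    exact hv (hdisj i j hne _ hhi hhj ▸ hT _ _ (hpath i).1 (hpath i).2 (hh i))
  simpa [Nat.card_coe_set_eq] using Nat.card_le_card_of_injective _ hinj

theorem IsSourceComponent.le_ncard_of_disjPaths [Finite V] (hS : IsSourceComponent E F S)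
    (hAS : Disjoint A S) {v : V} (hv : v ∈ S \ F) {n : ℕ} (hP : DisjPaths E F A v n) :
    n ≤ (A ∩ F).ncard :=
  hP.le_ncard (fun h => hv.2 h.2) fun _ _ hp hpF ha =>
    hS.head_mem_of_pathFromTo hAS hv.1 hp hpF ha

end

/-- If `G − F` has two distinct source components, then for the partition
`(S₁, V − S₁)` neither side propagates, so `G` fails condition SC with parameter `F`. -/
theorem two_source_components_fail_SC [Fintype V] (E : V → V → Prop) (f : ℕ)
    (F S₁ S₂ : Set V) (hF : F.ncard ≤ f)
    (h1 : IsSourceComponent E F S₁) (h2 : IsSourceComponent E F S₂) (hne : S₁ ≠ S₂) :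
    ¬ Propagates E f F S₁ ((Set.univ \ S₁) \ F) ∧
    ¬ Propagates E f F (Set.univ \ S₁) (S₁ \ F) ∧
    ¬ CondSC E f F := by
  have hdisj : Disjoint S₁ S₂ := h1.1.disjoint h2.1 hne
  obtain ⟨v₁, hv₁⟩ := h1.1.1
  obtain ⟨v₂, hv₂⟩ := h2.1.1
  have hv₁F : v₁ ∈ S₁ \ F := ⟨hv₁, (h1.1.2.1 hv₁).2⟩
  have hv₂F : v₂ ∈ S₂ \ F := ⟨hv₂, (h2.1.2.1 hv₂).2⟩
  have hv₂out : v₂ ∈ (univ \ S₁) \ F := ⟨⟨trivial, hdisj.notMem_of_mem_right hv₂⟩, hv₂F.2⟩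
  have not_from_S₁ : ¬ Propagates E f F S₁ ((univ \ S₁) \ F) := fun hp => by
    have hle := h2.le_ncard_of_disjPaths hdisj hv₂F (hp v₂ hv₂out)
    have hS₁F : S₁ ∩ F = ∅ := (subset_sdiff.mp h1.1.2.1).2.inter_eq
    simp [hS₁F] at hle
  have not_into_S₁ : ¬ Propagates E f F (univ \ S₁) (S₁ \ F) := fun hp => by
    have hle := h1.le_ncard_of_disjPaths disjoint_sdiff_left hv₁F (hp v₁ hv₁F)
    have := ncard_le_ncard (inter_subset_right : (univ \ S₁) ∩ F ⊆ F)
    omega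
  refine ⟨not_from_S₁, not_into_S₁, fun hSC => ?_⟩
  rcases hSC S₁ (univ \ S₁) (by simp) (by simp) ⟨v₁, hv₁F⟩ ⟨v₂, hv₂out⟩ with h | h
  · exact not_from_S₁ h
  · exact not_into_S₁ h
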